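/- arXiv:2507.06216 — 4 statements merged into one kernel-verified Lean document; each statement's English description precedes it below -/
import Mathlib

section
/- Let Φ_E and Φ_H be completely positive trace-preserving maps with Φ_E = Φ_H + δΦ where Φ_H ∘ δΦ = δΦ ∘ Φ_H = 0, and suppose ‖δΦ(ρ)‖₁ ≤ ε‖ρ‖₁ for all Hermitian ρ. Then Φ_E ∘ Φ_E = Φ_H + δΦ ∘ δΦ, and ‖(δΦ ∘ δΦ)(ρ)‖₁ ≤ ε²‖ρ‖₁ for every density matrix ρ. In particular, if an ensemble's k-th moment channel has additive error ε (diamond-norm distance ε to the Haar moment channel), then its twofold composition has additive error at most ε². -/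
open scoped ComplexOrder

open scoped MatrixOrder in
/-- The trace norm `‖A‖₁ = tr √(Aᴴ A)` of a complex matrix. -/
noncomputable def traceNorm {d : ℕ} (A : Matrix (Fin d) (Fin d) ℂ) : ℝ :=
  ((CFC.sqrt (A.conjTranspose * A)).trace).re

/- The channel identity is ring arithmetic: a perturbation `D` of an idempotent `P` that is
annihilated by `P` on both sides squares independently of it. The trace-norm bound is the
contraction hypothesis applied twice, once to `ρ` and once to the Hermitian matrix `δΦ ρ`. -/

theorem add_mul_self_of_isIdempotentElem {R : Type*} [NonUnitalNonAssocSemiring R] {P D : R}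
    (hP : IsIdempotentElem P) (hPD : P * D = 0) (hDP : D * P = 0) :
    (P + D) * (P + D) = P + D * D := by
  rw [add_mul, mul_add, mul_add, hP.eq, hPD, hDP, add_zero, zero_add]

section traceNorm

variable {d : ℕ}

open scoped MatrixOrder in
theorem traceNorm_nonneg (A : Matrix (Fin d) (Fin d) ℂ) : 0 ≤ traceNorm A := by
  have hsqrt := Matrix.nonneg_iff_posSemidef.mp (CFC.sqrt_nonneg (A.conjTranspose * A))
  exact (Complex.le_def.mp hsqrt.trace_nonneg).1

open scoped MatrixOrder in
theorem Matrix.PosSemidef.traceNorm_eq {A : Matrix (Fin d) (Fin d) ℂ} (hA : A.PosSemidef) :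
    traceNorm A = A.trace.re := by
  unfold traceNorm
  rw [hA.1.eq, CFC.sqrt_mul_self A hA.nonneg]

theorem traceNorm_apply_apply_le {ε : ℝ} (hε : 0 ≤ ε)
    {T : Matrix (Fin d) (Fin d) ℂ → Matrix (Fin d) (Fin d) ℂ}
    (hT : ∀ ρ : Matrix (Fin d) (Fin d) ℂ, ρ.IsHermitian → traceNorm (T ρ) ≤ ε * traceNorm ρ)
    {ρ : Matrix (Fin d) (Fin d) ℂ} (hρ : ρ.IsHermitian) (hTρ : (T ρ).IsHermitian) :
    traceNorm (T (T ρ)) ≤ ε ^ 2 * traceNorm ρ :=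
  calc traceNorm (T (T ρ)) ≤ ε * traceNorm (T ρ) := hT _ hTρ
    _ ≤ ε * (ε * traceNorm ρ) := mul_le_mul_of_nonneg_left (hT ρ hρ) hε
    _ = ε ^ 2 * traceNorm ρ := by ring

end traceNorm

theorem stmt_3_general {d : ℕ} (ε : ℝ)
    (ΦE ΦH δΦ : Matrix (Fin d) (Fin d) ℂ →ₗ[ℂ] Matrix (Fin d) (Fin d) ℂ)
    (hEpos : ∀ ρ : Matrix (Fin d) (Fin d) ℂ, ρ.PosSemidef → (ΦE ρ).PosSemidef)
    (hHpos : ∀ ρ : Matrix (Fin d) (Fin d) ℂ, ρ.PosSemidef → (ΦH ρ).PosSemidef)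
    (hE : ΦE = ΦH + δΦ)
    (hidem : ΦH ∘ₗ ΦH = ΦH)
    (h1 : ΦH ∘ₗ δΦ = 0) (h2 : δΦ ∘ₗ ΦH = 0)
    (hb : ∀ ρ : Matrix (Fin d) (Fin d) ℂ, ρ.IsHermitian → traceNorm (δΦ ρ) ≤ ε * traceNorm ρ) :
    ΦE ∘ₗ ΦE = ΦH + δΦ ∘ₗ δΦ ∧
      ∀ ρ : Matrix (Fin d) (Fin d) ℂ, ρ.PosSemidef → ρ.trace = 1 →
        traceNorm ((δΦ ∘ₗ δΦ) ρ) ≤ ε ^ 2 * traceNorm ρ := by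
  refine ⟨?_, fun ρ hρ htr => ?_⟩
  · simp only [hE, ← Module.End.mul_eq_comp] at hidem h1 h2 ⊢
    exact add_mul_self_of_isIdempotentElem hidem h1 h2
  · have hδρ : (δΦ ρ).IsHermitian := by
      have hdiff : δΦ ρ = ΦE ρ - ΦH ρ := by simp [hE]
      exact hdiff ▸ (hEpos ρ hρ).1.sub (hHpos ρ hρ).1
    have hρ_norm : traceNorm ρ = 1 := by simp [hρ.traceNorm_eq, htr]
    have hε : 0 ≤ ε := by
      simpa [hρ_norm] using (traceNorm_nonneg (δΦ ρ)).trans (hb ρ hρ.1)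
    exact traceNorm_apply_apply_le hε hb hρ.1 hδρ

/-- Let `Φ_E` and `Φ_H` be completely positive trace-preserving maps (here:
linear, positivity-preserving, trace-preserving maps on matrices) with `Φ_E = Φ_H + δΦ` where
`Φ_H` is idempotent and `Φ_H ∘ δΦ = δΦ ∘ Φ_H = 0`, and suppose `‖δΦ(ρ)‖₁ ≤ ε‖ρ‖₁` for all
Hermitian `ρ`. Then `Φ_E ∘ Φ_E = Φ_H + δΦ ∘ δΦ`, and `‖(δΦ ∘ δΦ)(ρ)‖₁ ≤ ε²‖ρ‖₁` for every
density matrix `ρ`. -/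
theorem stmt_3 {d : ℕ} (ε : ℝ)
    (ΦE ΦH δΦ : Matrix (Fin d) (Fin d) ℂ →ₗ[ℂ] Matrix (Fin d) (Fin d) ℂ)
    (hEpos : ∀ ρ : Matrix (Fin d) (Fin d) ℂ, ρ.PosSemidef → (ΦE ρ).PosSemidef)
    (hHpos : ∀ ρ : Matrix (Fin d) (Fin d) ℂ, ρ.PosSemidef → (ΦH ρ).PosSemidef)
    (hEtr : ∀ ρ : Matrix (Fin d) (Fin d) ℂ, (ΦE ρ).trace = ρ.trace)
    (hHtr : ∀ ρ : Matrix (Fin d) (Fin d) ℂ, (ΦH ρ).trace = ρ.trace)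
    (hE : ΦE = ΦH + δΦ)
    (hidem : ΦH ∘ₗ ΦH = ΦH)
    (h1 : ΦH ∘ₗ δΦ = 0) (h2 : δΦ ∘ₗ ΦH = 0)
    (hb : ∀ ρ : Matrix (Fin d) (Fin d) ℂ, ρ.IsHermitian → traceNorm (δΦ ρ) ≤ ε * traceNorm ρ) :
    ΦE ∘ₗ ΦE = ΦH + δΦ ∘ₗ δΦ ∧
      ∀ ρ : Matrix (Fin d) (Fin d) ℂ, ρ.PosSemidef → ρ.trace = 1 →
        traceNorm ((δΦ ∘ₗ δΦ) ρ) ≤ ε ^ 2 * traceNorm ρ :=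
  stmt_3_general ε ΦE ΦH δΦ hEpos hHpos hE hidem h1 h2 hb
end

section
/- For integers n ≥ 1 and k ≥ 1 with k² ≤ 2^n, the binomial coefficient satisfies C(2^n + k - 1, k) ≤ (2^{nk}/k!)·(1 + k²/2^n). -/
lemma aux_asc (N : ℕ) : ∀ k : ℕ, k ^ 2 ≤ N → N.ascFactorial k * N ≤ N ^ k * (N + k ^ 2)
  | 0, _ => by simp [Nat.ascFactorial_zero]
  | (k+1), h => by
      have hk : k ^ 2 ≤ N := le_trans (Nat.pow_le_pow_left (Nat.le_succ k) 2) h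
      have ih := aux_asc N k hk
      rw [Nat.ascFactorial_succ]
      calc (N + k) * N.ascFactorial k * N = (N.ascFactorial k * N) * (N + k) := by ring
        _ ≤ N ^ k * (N + k ^ 2) * (N + k) := Nat.mul_le_mul_right _ ih
        _ ≤ N ^ (k+1) * (N + (k+1) ^ 2) := by
            have hkey : k ^ 3 ≤ (k + 1) * N := by
              calc k ^ 3 ≤ (k+1) * (k+1)^2 := by nlinarith
                _ ≤ (k+1) * N := Nat.mul_le_mul_left _ h
            have : (N + k ^ 2) * (N + k) ≤ N * (N + (k+1) ^ 2) := by nlinarith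
            calc N ^ k * (N + k ^ 2) * (N + k) = N ^ k * ((N + k ^ 2) * (N + k)) := by ring
              _ ≤ N ^ k * (N * (N + (k+1)^2)) := Nat.mul_le_mul_left _ this
              _ = N ^ (k+1) * (N + (k+1)^2) := by ring

/-- For integers `n ≥ 1` and `k ≥ 1` with `k² ≤ 2^n`, the binomial coefficient
(the dimension of the symmetric subspace of `k` copies of a `2^n`-dimensional Hilbert space)
satisfies `C(2^n + k - 1, k) ≤ (2^{nk}/k!)·(1 + k²/2^n)`. -/
theorem stmt_7 (n k : ℕ) (hn : 1 ≤ n) (hk : 1 ≤ k) (h : k ^ 2 ≤ 2 ^ n) :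
    (Nat.choose (2 ^ n + k - 1) k : ℝ) ≤
      ((2 : ℝ) ^ (n * k) / (k.factorial : ℝ)) * (1 + (k : ℝ) ^ 2 / 2 ^ n) := by
  set N := 2 ^ n with hNdef
  have hNat : k.factorial * Nat.choose (N + k - 1) k * N ≤ N ^ k * (N + k ^ 2) := by
    rw [← Nat.ascFactorial_eq_factorial_mul_choose']
    exact aux_asc N k h
  have hcast : (k.factorial : ℝ) * (Nat.choose (N + k - 1) k : ℝ) * (N : ℝ) ≤
      (N : ℝ) ^ k * ((N : ℝ) + (k : ℝ) ^ 2) := by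
    exact_mod_cast hNat
  have hNpos : (0 : ℝ) < (N : ℝ) := by positivity
  have hfpos : (0 : ℝ) < (k.factorial : ℝ) := by exact_mod_cast k.factorial_pos
  rw [div_mul_eq_mul_div, le_div_iff₀ hfpos]
  have hrhs : (2 : ℝ) ^ (n * k) * (1 + (k : ℝ) ^ 2 / 2 ^ n) =
      (N : ℝ) ^ k * ((N : ℝ) + (k : ℝ) ^ 2) / (N : ℝ) := by
    push_cast [hNdef, pow_mul]
    field_simp
  calc (Nat.choose (N + k - 1) k : ℝ) * (k.factorial : ℝ)
      = (k.factorial : ℝ) * (Nat.choose (N + k - 1) k : ℝ) * (N : ℝ) / (N : ℝ) := by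
        field_simp
    _ ≤ (N : ℝ) ^ k * ((N : ℝ) + (k : ℝ) ^ 2) / (N : ℝ) :=
        div_le_div_of_nonneg_right hcast hNpos.le
    _ = (2 : ℝ) ^ (n * k) * (1 + (k : ℝ) ^ 2 / 2 ^ n) := hrhs.symm
end

section
/- Let S_k act on ({0,1}^n)^k by permuting coordinates, and let Π^j_dist denote the projector onto tuples whose first j entries are pairwise distinct. For a permutation π ∈ S_j with π(j) = j, the partial trace over the j-th tensor factor satisfies tr_j(π · Π^j_dist) = (2^n - j + 1) · π' · Π^{j-1}_dist, where π' is π restricted to the first j-1 elements; and if π(j) ≠ j, then tr_j(π · Π^j_dist) = 0. -/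
/-- The set of `n`-bit strings. -/
abbrev QStr (n : ℕ) : Type := Fin n → Bool

/-- The matrix of the permutation `π ∈ S_N` acting on `N` tensor copies of `ℂ^{2^n}`
by permuting the tensor factors. -/
def permMat (n N : ℕ) (π : Equiv.Perm (Fin N)) :
    Matrix (Fin N → QStr n) (Fin N → QStr n) ℂ :=
  fun a b => if a = b ∘ π then 1 else 0

/-- The projector onto tuples of pairwise distinct bitstrings (the distinct subspace) on
`N` tensor copies of `ℂ^{2^n}`. -/
def distMat (n N : ℕ) : Matrix (Fin N → QStr n) (Fin N → QStr n) ℂ :=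
  fun a b => if a = b ∧ Function.Injective a then 1 else 0

/-- The partial trace over the last tensor factor. -/
noncomputable def ptraceLast (n N : ℕ) (M : Matrix (Fin (N + 1) → QStr n) (Fin (N + 1) → QStr n) ℂ) :
    Matrix (Fin N → QStr n) (Fin N → QStr n) ℂ :=
  fun a b => ∑ z : QStr n, M (Fin.snoc a z) (Fin.snoc b z)

lemma pd_apply (n N : ℕ) (π : Equiv.Perm (Fin N)) (a b : Fin N → QStr n) :
    (permMat n N π * distMat n N) a b
      = if a = b ∘ π ∧ Function.Injective b then 1 else 0 := by
  rw [Matrix.mul_apply]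
  rw [Finset.sum_eq_single b]
  · by_cases h : Function.Injective b <;> simp [permMat, distMat, h]
  · intro c _ hc
    simp [permMat, distMat, hc]
  · simp

lemma snoc_inj_iff {n N : ℕ} (b : Fin N → QStr n) (z : QStr n) :
    Function.Injective (Fin.snoc b z : Fin (N+1) → QStr n)
      ↔ Function.Injective b ∧ z ∉ Set.range b := by
  constructor
  · intro h
    refine ⟨fun i k hik => ?_, ?_⟩
    · have := @h i.castSucc k.castSucc (by simpa using hik)
      exact Fin.castSucc_injective _ this
    · rintro ⟨k, hk⟩
      have := @h k.castSucc (Fin.last N) (by simpa using hk)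
      exact absurd this (by simp [Fin.ext_iff, k.isLt.ne])
  · rintro ⟨hb, hz⟩ i k hik
    induction i using Fin.lastCases with
    | last =>
      induction k using Fin.lastCases with
      | last => rfl
      | cast k => exact absurd ⟨k, by simpa using hik.symm⟩ hz
    | cast i =>
      induction k using Fin.lastCases with
      | last => exact absurd ⟨i, by simpa using hik⟩ hz
      | cast k => simp only [Fin.snoc_castSucc] at hik; exact congrArg _ (hb hik)


/-- Let `S_{j+1}` act on `({0,1}^n)^{j+1}` by permuting coordinates, and let
`Π_dist` denote the projector onto tuples of pairwise distinct entries. For a permutation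
`π ∈ S_{j+1}` fixing the last element, the partial trace over the last tensor factor satisfies
`tr_last(π · Π_dist) = (2^n - j) · π' · Π_dist`, where `π'` is `π` restricted to the first `j`
elements; and if `π` does not fix the last element, then `tr_last(π · Π_dist) = 0`.
(With `1`-indexed copies `j+1 ↦ j`, the factor `2^n - j` is the paper's `2^n - j + 1`.) -/
theorem stmt_14 (n j : ℕ) (π : Equiv.Perm (Fin (j + 1))) :
    (π (Fin.last j) = Fin.last j →
      ∃ π' : Equiv.Perm (Fin j),
        (∀ i : Fin j, (π' i).castSucc = π i.castSucc) ∧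
        ptraceLast n j (permMat n (j + 1) π * distMat n (j + 1)) =
          (((2 ^ n - j : ℕ) : ℂ)) • (permMat n j π' * distMat n j)) ∧
    (π (Fin.last j) ≠ Fin.last j →
      ptraceLast n j (permMat n (j + 1) π * distMat n (j + 1)) = 0) := by
  constructor
  · intro hfix
    have hne : ∀ i : Fin j, π i.castSucc ≠ Fin.last j := by
      intro i h
      exact absurd (π.injective (h.trans hfix.symm)) (Fin.castSucc_lt_last i).ne
    have hne' : ∀ i : Fin j, π.symm i.castSucc ≠ Fin.last j := by
      intro i h
      have : i.castSucc = Fin.last j := by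
        rw [← hfix, ← h, Equiv.apply_symm_apply]
      exact absurd this (Fin.castSucc_lt_last i).ne
    refine ⟨⟨fun i => (π i.castSucc).castPred (hne i),
            fun i => (π.symm i.castSucc).castPred (hne' i), ?_, ?_⟩, fun i => Fin.castSucc_castPred _ (hne i), ?_⟩
    · intro i; simp [Fin.castSucc_castPred]
    · intro i; simp [Fin.castSucc_castPred]
    · ext a b
      simp only [ptraceLast, pd_apply, Matrix.smul_apply, Equiv.coe_fn_mk]
      have key : ∀ z : QStr n,
          ((Fin.snoc a z : Fin (j+1) → QStr n) = (Fin.snoc b z : Fin (j+1) → QStr n) ∘ π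
            ∧ Function.Injective (Fin.snoc b z : Fin (j+1) → QStr n))
          ↔ ((a = b ∘ fun i => (π i.castSucc).castPred (hne i))
              ∧ Function.Injective b) ∧ z ∉ Set.range b := by
        intro z
        rw [snoc_inj_iff]
        constructor
        · rintro ⟨h1, h2, h3⟩
          refine ⟨⟨funext fun i => ?_, h2⟩, h3⟩
          have := congrFun h1 i.castSucc
          rw [Fin.snoc_castSucc] at this
          have h4 : (Fin.snoc b z : Fin (j+1) → QStr n) ((π i.castSucc).castPred (hne i)).castSucc
              = b ((π i.castSucc).castPred (hne i)) := Fin.snoc_castSucc ..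
          rw [Fin.castSucc_castPred] at h4
          rw [this, Function.comp_apply, Function.comp_apply, h4]
        · rintro ⟨⟨h1, h2⟩, h3⟩
          refine ⟨funext fun i => ?_, h2, h3⟩
          induction i using Fin.lastCases with
          | last => simp [hfix]
          | cast i =>
            have h4 : (Fin.snoc b z : Fin (j+1) → QStr n) ((π i.castSucc).castPred (hne i)).castSucc
                = b ((π i.castSucc).castPred (hne i)) := Fin.snoc_castSucc ..
            rw [Fin.castSucc_castPred] at h4
            rw [Fin.snoc_castSucc, Function.comp_apply, h4]
            exact congrFun h1 i
      simp_rw [key]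
      by_cases hC : (a = b ∘ fun i => (π i.castSucc).castPred (hne i)) ∧ Function.Injective b
      · simp only [hC, true_and, if_pos hC]
        classical
        rw [Finset.sum_boole]
        have h1 : Finset.univ.filter (fun z : QStr n => z ∉ Set.range b)
            = Finset.univ \ Finset.image b Finset.univ := by
          ext z; simp
        rw [h1, Finset.card_sdiff_of_subset (Finset.subset_univ _),
          Finset.card_image_of_injective _ hC.2]
        simp [smul_eq_mul, Fintype.card_fun]
      · simp only [hC, false_and, if_neg hC, if_false, smul_zero, Finset.sum_const_zero]
  · intro hnf
    ext a b
    have hk : π (Fin.last j) = ((π (Fin.last j)).castPred hnf).castSucc :=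
      (Fin.castSucc_castPred _ hnf).symm
    set k := (π (Fin.last j)).castPred hnf with hkdef
    simp only [ptraceLast, pd_apply]
    refine Finset.sum_eq_zero fun z _ => ?_
    rw [if_neg]
    rintro ⟨h1, h2⟩
    have hz : z = b k := by
      have := congrFun h1 (Fin.last j)
      rw [Fin.snoc_last, Function.comp_apply, hk, Fin.snoc_castSucc] at this
      exact this
    rw [snoc_inj_iff] at h2
    exact h2.2 ⟨k, hz.symm⟩
end

section
/- For a random binary phase function applied blockwise: let m ≥ 2 and for tuples x, x̃ of k strings over m patches with x locally distinct (pairwise distinct on each patch), the two-layer blocked phase twirl Π_a δ(x̃_{a,a+1}, x_{a,a+1} stabilizations) equals the global phase twirl δ(x̃, x stabilizations) on the locally distinct subspace; both equal Σ_{π ∈ S_k} δ_{x̃ = πx}. -/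
/-!
On a locally distinct tuple every local string occurs at most once, so equal parities of
multiplicities force every string of `x` to occur in `x̃` and, by counting, `x̃` to be a
permutation of `x`. Applied to a window `{a, a+1}` this yields a permutation `π_a`; since the
column `a + 1` of `x` is injective, `π_a` and `π_{a+1}` are both determined by that column, so a
single permutation works for every patch.
-/

open Function Finset

section Parity

variable {ι β : Type*} [Fintype ι] [DecidableEq β]

lemma card_filter_comp_perm (x : ι → β) (π : Equiv.Perm ι) (z : β) :
    #{j | x (π j) = z} = #{j | x j = z} :=
  card_equiv π (by simp)

lemma exists_perm_of_card_filter_mod_two_eq {x xt : ι → β} (hx : Injective x)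
    (h : ∀ z, #{j | xt j = z} % 2 = #{j | x j = z} % 2) :
    ∃ π : Equiv.Perm ι, ∀ j, xt j = x (π j) := by
  have hsurj : ∀ i, ∃ j, xt j = x i := by
    intro i
    have hone : #{j | x j = x i} = 1 := card_eq_one.mpr ⟨i, by ext; simp [hx.eq_iff]⟩
    have hodd := h (x i)
    rw [hone] at hodd
    obtain ⟨j, hj⟩ := card_pos.mp (by omega : 0 < #{j | xt j = x i})
    exact ⟨j, (mem_filter.mp hj).2⟩
  choose g hg using hsurj
  have hg_inj : Injective g := fun i i' hii' => hx (by rw [← hg i, ← hg i', hii'])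
  let e := Equiv.ofBijective g (Finite.injective_iff_bijective.mp hg_inj)
  exact ⟨e.symm, fun j => (congrArg xt (e.apply_symm_apply j)).symm.trans (hg (e.symm j))⟩

lemma card_filter_mod_two_eq_iff_exists_perm {x xt : ι → β} (hx : Injective x) :
    (∀ z, #{j | xt j = z} % 2 = #{j | x j = z} % 2) ↔
      ∃ π : Equiv.Perm ι, ∀ j, xt j = x (π j) := by
  refine ⟨exists_perm_of_card_filter_mod_two_eq hx, fun ⟨π, hπ⟩ z => ?_⟩
  simp only [hπ, card_filter_comp_perm]

end Parity

lemma exists_perm_of_window_perms {ι α : Type*} {m : ℕ} (hm : 2 ≤ m) {x xt : ι → Fin m → α}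
    (hx : ∀ a, Injective fun j => x j a)
    (hwin : ∀ (a : ℕ) (ha : a + 1 < m), ∃ π : Equiv.Perm ι, ∀ j,
      xt j ⟨a, a.lt_of_succ_lt ha⟩ = x (π j) ⟨a, a.lt_of_succ_lt ha⟩ ∧
        xt j ⟨a + 1, ha⟩ = x (π j) ⟨a + 1, ha⟩) :
    ∃ π : Equiv.Perm ι, ∀ j, xt j = x (π j) := by
  obtain ⟨π, hπ⟩ := hwin 0 (by omega)
  have hcol : ∀ (b : ℕ) (hb : b < m) (j : ι), xt j ⟨b, hb⟩ = x (π j) ⟨b, hb⟩ := by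
    intro b
    induction b with
    | zero => exact fun _ j => (hπ j).1
    | succ b ih =>
      intro hb j
      obtain ⟨σ, hσ⟩ := hwin b hb
      have hσπ : σ j = π j := hx ⟨b, by omega⟩ (((hσ j).1).symm.trans (ih (by omega) j))
      rw [(hσ j).2, hσπ]
  exact ⟨π, fun j => funext fun b => hcol b b.2 j⟩

/-- For a random binary phase function applied blockwise: let `m ≥ 2` and,
for `k`-tuples `x, x̃` of strings over `m` patches with `x` locally distinct (pairwise distinct
on each patch), the two-layer blocked phase twirl condition
`∏_a δ(x̃_{a,a+1}, x_{a,a+1} stabilizations)` equals the global phase twirl condition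
`δ(x̃, x stabilizations)` on the locally distinct subspace; both are equivalent to
`∃ π ∈ S_k, x̃ = πx`. (Stabilization means equal parity of multiplicities.) -/
theorem stmt_18 {α : Type*} [DecidableEq α] (k m : ℕ) (hm : 2 ≤ m)
    (x xt : Fin k → Fin m → α)
    (hdist : ∀ a : Fin m, Function.Injective fun j => x j a) :
    ((∀ (a : ℕ) (ha : a + 1 < m), ∀ z : α × α,
        (Finset.univ.filter fun j : Fin k =>
            (xt j ⟨a, by omega⟩, xt j ⟨a + 1, ha⟩) = z).card % 2 =
        (Finset.univ.filter fun j : Fin k =>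
            (x j ⟨a, by omega⟩, x j ⟨a + 1, ha⟩) = z).card % 2) ↔
      ∃ π : Equiv.Perm (Fin k), ∀ j, xt j = x (π j)) ∧
    ((∀ z : Fin m → α,
        (Finset.univ.filter fun j : Fin k => xt j = z).card % 2 =
        (Finset.univ.filter fun j : Fin k => x j = z).card % 2) ↔
      ∃ π : Equiv.Perm (Fin k), ∀ j, xt j = x (π j)) := by
  have hwindow (a : ℕ) (ha : a + 1 < m) :=
    card_filter_mod_two_eq_iff_exists_perm
      (xt := fun j => (xt j ⟨a, by omega⟩, xt j ⟨a + 1, ha⟩))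
      (x := fun j => (x j ⟨a, by omega⟩, x j ⟨a + 1, ha⟩))
      ((hdist ⟨a, by omega⟩).of_comp (f := Prod.fst))
  have hglobal := card_filter_mod_two_eq_iff_exists_perm (xt := xt)
    ((hdist ⟨0, by omega⟩).of_comp (f := fun y : Fin m → α => y ⟨0, by omega⟩))
  refine ⟨⟨fun h => ?_, fun ⟨π, hπ⟩ a ha => (hwindow a ha).mpr ⟨π, fun j => by rw [hπ j]⟩⟩,
    hglobal⟩
  refine exists_perm_of_window_perms hm hdist fun a ha => ?_
  obtain ⟨π, hπ⟩ := (hwindow a ha).mp (h a ha)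
  exact ⟨π, fun j => Prod.ext_iff.mp (hπ j)⟩
end
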